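/- Optimality of the SIM for CGU state sets (Theorem 3, part 3): Let {ρ_{ik} = U_i ρ_k U_i^*} be a CGU state set with generators ρ_k = φ_kφ_k^*, let Φ be the matrix with block columns φ_{ik} = U_iφ_k (so ΦΦ^* = lrΔ, assumed invertible), and let λ_min be the smallest eigenvalue of Δ. If there is a constant α such that φ_k^*(ΦΦ^*)^{-1}φ_k = α I_s for every 1 ≤ k ≤ r, then for every β with 1 − nλ_min ≤ β < 1, the SIM with γ = √((1−β)/n) is a measurement with P_I = β and maximizes P_D among all measurements with P_I = β. -/

import Mathlib

open Matrix BigOperators ComplexOrder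

/-!
Write `ψ_{ik} = U_i φ_k / √(lr)`, so that `Δ = ∑ ψ_{ik} ψ_{ik}^*`. Since `Δ` is invariant under
conjugation by the group, so is `Δ⁻¹`, and the hypothesis becomes `ψ_{ik}^* Δ⁻¹ ψ_{ik} = α I` for
all `i, k`. This forces `K = α Δ - ψ ψ^*` to satisfy `K Δ⁻¹ K = α K`, hence `K ≥ 0`, so every
measurement with `Tr(Δ Π₀) = β` has `P_D ≤ α Tr(Δ (I - Π₀)) = α (1 - β)`. The SIM has
`∑ μ μ^* = γ² Δ⁻¹`, which is `≤ I` exactly when `γ² ≤ λ_min`, and it attains the bound because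
`ψ ψ^* Δ⁻¹ ψ ψ^* = α ψ ψ^*`.
-/

theorem Fintype.sum_comp_mul_left_of_mul_closed {ι G M : Type*} [Fintype ι] [Monoid G]
    [AddCommMonoid M] {U : ι → G} (hU : Function.Injective U)
    (hmul : ∀ i j, ∃ k, U i * U j = U k) {j : ι} (hj : IsUnit (U j)) (f : G → M) :
    ∑ i, f (U j * U i) = ∑ i, f (U i) := by
  choose σ hσ using hmul j
  have hσ_inj : Function.Injective σ := fun x y hxy =>
    hU (hj.mul_left_cancel (by rw [hσ x, hσ y, hxy]))
  simp_rw [hσ]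
  exact (Finite.injective_iff_bijective.mp hσ_inj).sum_comp (f ∘ U)

namespace Matrix

variable {𝕜 m s ι : Type*} [RCLike 𝕜] [Fintype m]

theorem mul_conjTranspose_mul_mul_conjTranspose_eq_smul [Fintype s] [DecidableEq s]
    {B : Matrix m m 𝕜} {χ : Matrix m s 𝕜} {c : 𝕜} (h : χᴴ * B * χ = c • 1) :
    χ * χᴴ * B * (χ * χᴴ) = c • (χ * χᴴ) := by
  rw [show χ * χᴴ * B * (χ * χᴴ) = χ * (χᴴ * B * χ) * χᴴ by simp only [Matrix.mul_assoc],
    h, Matrix.mul_smul, Matrix.mul_one, Matrix.smul_mul]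

theorem pos_of_conjTranspose_mul_mul_eq_smul_one [DecidableEq s] {B : Matrix m m 𝕜}
    (hB : B.PosDef) {χ : Matrix m s 𝕜} (hχ : χ ≠ 0) {b : ℝ} (h : χᴴ * B * χ = (b : 𝕜) • 1) :
    0 < b := by
  obtain ⟨i, j, hij⟩ : ∃ i j, χ i j ≠ 0 := by
    by_contra! h0
    exact hχ (Matrix.ext h0)
  set v : m → 𝕜 := fun i => χ i j
  have hv : v ≠ 0 := fun h0 => hij (congrFun h0 i)
  have hentry : (χᴴ * B * χ) j j = star v ⬝ᵥ B *ᵥ v := by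
    simp only [mul_apply, dotProduct, mulVec, conjTranspose_apply, Finset.mul_sum, Finset.sum_mul,
      Pi.star_apply, v, mul_assoc]
    exact Finset.sum_comm
  have hpos := hB.dotProduct_mulVec_pos hv
  rw [← hentry, h] at hpos
  simpa using hpos

variable [DecidableEq m]

theorem PosSemidef.trace_mul_nonneg {A B : Matrix m m 𝕜} (hA : A.PosSemidef)
    (hB : B.PosSemidef) : 0 ≤ (A * B).trace := by
  open scoped MatrixOrder in
  obtain ⟨C, rfl⟩ := CStarAlgebra.nonneg_iff_eq_star_mul_self.mp hB.nonneg
  rw [star_eq_conjTranspose, ← Matrix.mul_assoc, trace_mul_comm, ← Matrix.mul_assoc]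
  exact (hA.mul_mul_conjTranspose_same C).trace_nonneg

open scoped MatrixOrder in
theorem posSemidef_one_sub_smul_inv {A : Matrix m m 𝕜} (hA : A.PosDef) {g : ℝ}
    (hg : ∀ x ∈ spectrum ℝ A, g ≤ x) : (1 - (g : 𝕜) • A⁻¹).PosSemidef := by
  have hpos : ∀ x ∈ spectrum ℝ A, 0 < x := by
    rw [hA.1.spectrum_real_eq_range_eigenvalues]
    rintro _ ⟨i, rfl⟩
    exact hA.eigenvalues_pos i
  have hcont (f : ℝ → ℝ) : ContinuousOn f (spectrum ℝ A) := A.finite_real_spectrum.continuousOn f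
  have hinv : cfc (fun x : ℝ => x⁻¹) A = A⁻¹ := by
    rw [cfc_inv (fun x => x) A (fun x hx => (hpos x hx).ne') (hcont _), cfc_id' ℝ A,
      ← nonsing_inv_eq_ringInverse]
  have hcfc : 1 - (g : 𝕜) • A⁻¹ = cfc (fun x : ℝ => 1 - g * x⁻¹) A := by
    rw [cfc_sub _ _ A (hcont _) (hcont _), cfc_const_one ℝ A, cfc_const_mul g _ A (hcont _), hinv,
      RCLike.real_smul_eq_coe_smul (K := 𝕜)]
  rw [hcfc, ← nonneg_iff_posSemidef]
  refine cfc_nonneg fun x hx => ?_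
  rw [sub_nonneg, ← div_eq_mul_inv, div_le_one (hpos x hx)]
  exact hg x hx

theorem conjTranspose_mul_inv_mul_of_conj_eq {U A : Matrix m m 𝕜} (hU : U * Uᴴ = 1)
    (h : U * A * Uᴴ = A) : Uᴴ * A⁻¹ * U = A⁻¹ := by
  have hU' : Uᴴ * U = 1 := mul_eq_one_comm.mp hU
  have h' : Uᴴ * A * U = A := by
    nth_rewrite 1 [← h]
    simp only [← Matrix.mul_assoc, hU', Matrix.one_mul]
    rw [Matrix.mul_assoc, hU', Matrix.mul_one]
  conv_rhs => rw [← h']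
  rw [Matrix.mul_inv_rev, Matrix.mul_inv_rev, inv_eq_left_inv hU', inv_eq_left_inv hU,
    Matrix.mul_assoc]

theorem conj_sum_conj_eq [Fintype ι] {U : ι → Matrix m m 𝕜} (hU : Function.Injective U)
    (hmul : ∀ i j, ∃ k, U i * U j = U k) (hunit : ∀ i, U i * (U i)ᴴ = 1)
    (X : Matrix m m 𝕜) (j : ι) :
    U j * (∑ i, U i * X * (U i)ᴴ) * (U j)ᴴ = ∑ i, U i * X * (U i)ᴴ := by
  have hreindex := Fintype.sum_comp_mul_left_of_mul_closed hU hmul (.of_mul_eq_one _ (hunit j))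
    fun V => V * X * Vᴴ
  simp only [conjTranspose_mul, Matrix.mul_assoc] at hreindex
  simp only [Finset.mul_sum, Finset.sum_mul, Matrix.mul_assoc, hreindex]

theorem smul_inv_mul_mul_conjTranspose [Fintype s] {A : Matrix m m 𝕜} (hA : A.IsHermitian)
    (γ : ℝ) (χ : Matrix m s 𝕜) :
    ((γ : 𝕜) • (A⁻¹ * χ)) * ((γ : 𝕜) • (A⁻¹ * χ))ᴴ =
      ((γ ^ 2 : ℝ) : 𝕜) • (A⁻¹ * (χ * χᴴ) * A⁻¹) := by
  rw [conjTranspose_smul, conjTranspose_mul, conjTranspose_nonsing_inv, hA.eq, RCLike.star_def,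
    RCLike.conj_ofReal, Matrix.smul_mul, Matrix.mul_smul, smul_smul, ← RCLike.ofReal_mul, ← sq]
  simp only [Matrix.mul_assoc]

theorem sum_inv_mul_mul_inv [Fintype s] [Fintype ι] {ψ : ι → Matrix m s 𝕜} {A : Matrix m m 𝕜}
    (hA : IsUnit A.det) (hAψ : A = ∑ j, ψ j * (ψ j)ᴴ) :
    ∑ j, A⁻¹ * (ψ j * (ψ j)ᴴ) * A⁻¹ = A⁻¹ := by
  rw [← Finset.sum_mul, ← Finset.mul_sum, ← hAψ, nonsing_inv_mul _ hA, Matrix.one_mul]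

variable [Fintype s] [DecidableEq s]

theorem posSemidef_smul_sub_mul_conjTranspose {A : Matrix m m 𝕜} (hA : A.PosDef)
    {χ : Matrix m s 𝕜} {b : ℝ} (hb : 0 < b) (h : χᴴ * A⁻¹ * χ = (b : 𝕜) • 1) :
    ((b : 𝕜) • A - χ * χᴴ).PosSemidef := by
  set K := (b : 𝕜) • A - χ * χᴴ
  have hdet : IsUnit A.det := (isUnit_iff_isUnit_det A).mp hA.isUnit
  have hK : Kᴴ = K := by simp [K, conjTranspose_sub, conjTranspose_smul, hA.1.eq]
  -- `b • K` is congruent to the positive definite matrix `A⁻¹`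
  have hsq : K * A⁻¹ * Kᴴ = (b : 𝕜) • K := by
    rw [hK]
    simp only [K, Matrix.sub_mul, Matrix.mul_sub, Matrix.smul_mul, Matrix.mul_smul,
      mul_nonsing_inv _ hdet, nonsing_inv_mul_cancel_right _ _ hdet, Matrix.one_mul,
      mul_conjTranspose_mul_mul_conjTranspose_eq_smul h, smul_sub, smul_smul]
    abel
  have hbinv : (0 : 𝕜) ≤ ((b⁻¹ : ℝ) : 𝕜) := RCLike.ofReal_nonneg.mpr (inv_nonneg.mpr hb.le)
  have hpsd := (hA.inv.posSemidef.mul_mul_conjTranspose_same K).smul hbinv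
  rwa [hsq, smul_smul, ← RCLike.ofReal_mul, inv_mul_cancel₀ hb.ne', RCLike.ofReal_one,
    one_smul] at hpsd

theorem re_trace_mul_conjTranspose_mul_le {A : Matrix m m 𝕜} (hA : A.PosDef)
    {χ : Matrix m s 𝕜} (hχ : χ ≠ 0) {b : ℝ} (h : χᴴ * A⁻¹ * χ = (b : 𝕜) • 1)
    {N : Matrix m m 𝕜} (hN : N.PosSemidef) :
    RCLike.re (χ * χᴴ * N).trace ≤ b * RCLike.re (A * N).trace := by
  have hb := pos_of_conjTranspose_mul_mul_eq_smul_one hA.inv hχ h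
  have hnonneg := RCLike.nonneg_iff.mp
    ((posSemidef_smul_sub_mul_conjTranspose hA hb h).trace_mul_nonneg hN)
  simpa [Matrix.sub_mul, trace_sub, trace_smul, RCLike.smul_re] using hnonneg.1

variable [Fintype ι] {ψ : ι → Matrix m s 𝕜} {A : Matrix m m 𝕜} {b : ℝ}

theorem sum_re_trace_mul_le (hA : A.PosDef) (hψ : ∀ j, ψ j ≠ 0)
    (hb : ∀ j, (ψ j)ᴴ * A⁻¹ * ψ j = (b : 𝕜) • 1) {N : ι → Matrix m m 𝕜}
    (hN : ∀ j, (N j).PosSemidef) :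
    ∑ j, RCLike.re (ψ j * (ψ j)ᴴ * N j).trace ≤ b * RCLike.re (A * ∑ j, N j).trace := by
  rw [Matrix.mul_sum, trace_sum, map_sum, Finset.mul_sum]
  exact Finset.sum_le_sum fun j _ => re_trace_mul_conjTranspose_mul_le hA (hψ j) (hb j) (hN j)

theorem sum_re_trace_mul_smul_inv_mul_mul_inv (hA : IsUnit A.det)
    (hAψ : A = ∑ j, ψ j * (ψ j)ᴴ) (hb : ∀ j, (ψ j)ᴴ * A⁻¹ * ψ j = (b : 𝕜) • 1) (g : ℝ) :
    ∑ j, RCLike.re (ψ j * (ψ j)ᴴ * ((g : 𝕜) • (A⁻¹ * (ψ j * (ψ j)ᴴ) * A⁻¹))).trace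
      = b * g * Fintype.card m := by
  have hterm : ∀ j, ψ j * (ψ j)ᴴ * ((g : 𝕜) • (A⁻¹ * (ψ j * (ψ j)ᴴ) * A⁻¹))
      = ((b * g : ℝ) : 𝕜) • (ψ j * (ψ j)ᴴ * A⁻¹) := fun j => by
    rw [Matrix.mul_smul, ← Matrix.mul_assoc, ← Matrix.mul_assoc,
      mul_conjTranspose_mul_mul_conjTranspose_eq_smul (hb j), Matrix.smul_mul, smul_smul,
      RCLike.ofReal_mul, mul_comm (g : 𝕜)]
  have htrace : ∑ j, (ψ j * (ψ j)ᴴ * A⁻¹).trace = Fintype.card m := by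
    rw [← trace_sum, ← Finset.sum_mul, ← hAψ, mul_nonsing_inv _ hA, trace_one]
  simp_rw [hterm, trace_smul, smul_eq_mul, RCLike.re_ofReal_mul, ← Finset.mul_sum, ← map_sum,
    htrace, RCLike.natCast_re]

theorem sim_optimal {Δ : Matrix m m 𝕜} (hΔ : Δ = ∑ j, ψ j * (ψ j)ᴴ) (hdet : IsUnit Δ.det)
    (hΔtr : Δ.trace = 1) (hψ : ∀ j, ψ j ≠ 0) (hb : ∀ j, (ψ j)ᴴ * Δ⁻¹ * ψ j = (b : 𝕜) • 1)
    {β γ : ℝ} (hγβ : γ ^ 2 * Fintype.card m = 1 - β) (hγΔ : ∀ x ∈ spectrum ℝ Δ, γ ^ 2 ≤ x)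
    {μ : ι → Matrix m s 𝕜} (hμ : ∀ j, μ j = (γ : 𝕜) • (Δ⁻¹ * ψ j)) :
    (1 - ∑ j, μ j * (μ j)ᴴ).PosSemidef ∧
    (Δ * (1 - ∑ j, μ j * (μ j)ᴴ)).trace = β ∧
    ∀ (N₀ : Matrix m m 𝕜) (N : ι → Matrix m m 𝕜), (∀ j, (N j).PosSemidef) →
      N₀ + ∑ j, N j = 1 → (Δ * N₀).trace = β →
      ∑ j, RCLike.re (ψ j * (ψ j)ᴴ * N j).trace ≤
        ∑ j, RCLike.re (ψ j * (ψ j)ᴴ * (μ j * (μ j)ᴴ)).trace := by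
  have hΔpd : Δ.PosDef := (hΔ ▸ posSemidef_sum Finset.univ fun j _ =>
    posSemidef_self_mul_conjTranspose (ψ j)).posDef_iff_isUnit.mpr
    ((isUnit_iff_isUnit_det Δ).mpr hdet)
  have hμμ : ∀ j, μ j * (μ j)ᴴ = ((γ ^ 2 : ℝ) : 𝕜) • (Δ⁻¹ * (ψ j * (ψ j)ᴴ) * Δ⁻¹) := fun j => by
    rw [hμ, smul_inv_mul_mul_conjTranspose hΔpd.1]
  have hsum : ∑ j, μ j * (μ j)ᴴ = ((γ ^ 2 : ℝ) : 𝕜) • Δ⁻¹ := by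
    simp_rw [hμμ, ← Finset.smul_sum, sum_inv_mul_mul_inv hdet hΔ]
  have hinconclusive : (Δ * (1 - ∑ j, μ j * (μ j)ᴴ)).trace = β := by
    rw [hsum, Matrix.mul_sub, Matrix.mul_one, Matrix.mul_smul, mul_nonsing_inv _ hdet, trace_sub,
      trace_smul, trace_one, hΔtr, smul_eq_mul, ← RCLike.ofReal_natCast, ← RCLike.ofReal_mul, hγβ]
    simp
  refine ⟨hsum ▸ posSemidef_one_sub_smul_inv hΔpd hγΔ, hinconclusive,
    fun N₀ N hN hN₁ hN₀ => ?_⟩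
  have hconclusive : RCLike.re (Δ * ∑ j, N j).trace = γ ^ 2 * Fintype.card m := by
    rw [eq_sub_of_add_eq' hN₁, Matrix.mul_sub, Matrix.mul_one, trace_sub, hΔtr, hN₀, hγβ]
    simp
  calc ∑ j, RCLike.re (ψ j * (ψ j)ᴴ * N j).trace ≤ b * (γ ^ 2 * Fintype.card m) :=
        hconclusive ▸ sum_re_trace_mul_le hΔpd hψ hb hN
    _ = _ := by simp_rw [hμμ, sum_re_trace_mul_smul_inv_mul_mul_inv hdet hΔ hb]; ring

end Matrix

section CGU

variable {n l r s : ℕ} {U : Fin l → Matrix (Fin n) (Fin n) ℂ}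
  {φ : Fin r → Matrix (Fin n) (Fin s) ℂ} {ρ : Fin l → Fin r → Matrix (Fin n) (Fin n) ℂ}
  {Δ : Matrix (Fin n) (Fin n) ℂ} {ψ : Fin l → Fin r → Matrix (Fin n) (Fin s) ℂ}

theorem cgu_mul_conjTranspose_eq_smul_state
    (hρ : ∀ i k, ρ i k = U i * (φ k * (φ k)ᴴ) * (U i)ᴴ)
    (hψ : ∀ i k, ψ i k = (Real.sqrt (1 / (l * r)) : ℂ) • (U i * φ k)) (i : Fin l) (k : Fin r) :
    ψ i k * (ψ i k)ᴴ = (1 / ((l : ℂ) * r)) • ρ i k := by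
  rw [hψ, conjTranspose_smul, Matrix.smul_mul, Matrix.mul_smul, smul_smul, Complex.star_def,
    Complex.conj_ofReal, ← Complex.ofReal_mul, Real.mul_self_sqrt (by positivity), hρ,
    conjTranspose_mul]
  push_cast
  simp only [Matrix.mul_assoc]

theorem cgu_trace_state (hUunit : ∀ i, U i * (U i)ᴴ = 1)
    (hφtr : ∀ k, (φ k * (φ k)ᴴ).trace = 1) (hρ : ∀ i k, ρ i k = U i * (φ k * (φ k)ᴴ) * (U i)ᴴ)
    (i : Fin l) (k : Fin r) : (ρ i k).trace = 1 := by
  rw [hρ, trace_mul_cycle, mul_eq_one_comm.mp (hUunit i), Matrix.one_mul, hφtr]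

theorem cgu_density_eq_sum (hρ : ∀ i k, ρ i k = U i * (φ k * (φ k)ᴴ) * (U i)ᴴ)
    (hΔ : Δ = (1 / ((l : ℂ) * r)) • ∑ i, ∑ k, ρ i k)
    (hψ : ∀ i k, ψ i k = (Real.sqrt (1 / (l * r)) : ℂ) • (U i * φ k)) :
    Δ = ∑ i, ∑ k, ψ i k * (ψ i k)ᴴ := by
  simp only [cgu_mul_conjTranspose_eq_smul_state hρ hψ, hΔ, Finset.smul_sum]

theorem cgu_trace_density (hUunit : ∀ i, U i * (U i)ᴴ = 1)
    (hφtr : ∀ k, (φ k * (φ k)ᴴ).trace = 1) (hρ : ∀ i k, ρ i k = U i * (φ k * (φ k)ᴴ) * (U i)ᴴ)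
    (hΔ : Δ = (1 / ((l : ℂ) * r)) • ∑ i, ∑ k, ρ i k) (hc : (l : ℂ) * r ≠ 0) : Δ.trace = 1 := by
  simp only [hΔ, trace_smul, trace_sum, cgu_trace_state hUunit hφtr hρ, Finset.sum_const,
    Finset.card_univ, Fintype.card_fin, nsmul_eq_mul, mul_one, smul_eq_mul]
  exact one_div_mul_cancel hc

theorem cgu_ne_zero (hUunit : ∀ i, U i * (U i)ᴴ = 1) (hφtr : ∀ k, (φ k * (φ k)ᴴ).trace = 1)
    (hρ : ∀ i k, ρ i k = U i * (φ k * (φ k)ᴴ) * (U i)ᴴ)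
    (hψ : ∀ i k, ψ i k = (Real.sqrt (1 / (l * r)) : ℂ) • (U i * φ k)) (hc : (l : ℂ) * r ≠ 0)
    (i : Fin l) (k : Fin r) : ψ i k ≠ 0 := fun h => by
  have htr := congrArg trace (cgu_mul_conjTranspose_eq_smul_state hρ hψ i k)
  rw [h, Matrix.zero_mul, trace_zero, trace_smul, cgu_trace_state hUunit hφtr hρ, smul_eq_mul,
    mul_one] at htr
  exact one_div_ne_zero hc htr.symm

theorem cgu_re_trace_state_mul (hρ : ∀ i k, ρ i k = U i * (φ k * (φ k)ᴴ) * (U i)ᴴ)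
    (hψ : ∀ i k, ψ i k = (Real.sqrt (1 / (l * r)) : ℂ) • (U i * φ k))
    (X : Fin l → Fin r → Matrix (Fin n) (Fin n) ℂ) :
    (1 / (l * r) : ℝ) * ∑ i, ∑ k, ((ρ i k * X i k).trace).re
      = ∑ i, ∑ k, ((ψ i k * (ψ i k)ᴴ * X i k).trace).re := by
  simp [cgu_mul_conjTranspose_eq_smul_state hρ hψ, trace_smul, Finset.mul_sum]

theorem cgu_conjTranspose_mul_inv_mul_eq (hUunit : ∀ i, U i * (U i)ᴴ = 1)
    (hUinj : Function.Injective U) (hUmul : ∀ i j, ∃ k, U i * U j = U k)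
    (hρ : ∀ i k, ρ i k = U i * (φ k * (φ k)ᴴ) * (U i)ᴴ)
    (hΔ : Δ = (1 / ((l : ℂ) * r)) • ∑ i, ∑ k, ρ i k) (i : Fin l) :
    (U i)ᴴ * Δ⁻¹ * U i = Δ⁻¹ := by
  have hΔ' : Δ = (1 / ((l : ℂ) * r)) • ∑ i, U i * (∑ k, φ k * (φ k)ᴴ) * (U i)ᴴ := by
    simp only [hΔ, hρ, Finset.mul_sum, Finset.sum_mul]
  refine conjTranspose_mul_inv_mul_of_conj_eq (hUunit i) ?_
  rw [hΔ', Matrix.mul_smul, Matrix.smul_mul, conj_sum_conj_eq hUinj hUmul hUunit]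

theorem cgu_conjTranspose_mul_inv_mul_eq_smul_one (hUΔ : ∀ i, (U i)ᴴ * Δ⁻¹ * U i = Δ⁻¹)
    (hΔinv : IsUnit Δ.det) (hc : (l : ℂ) * r ≠ 0) {α : ℝ}
    (hα : ∀ k, (φ k)ᴴ * (((l : ℂ) * r) • Δ)⁻¹ * φ k = (α : ℂ) • 1)
    (hψ : ∀ i k, ψ i k = (Real.sqrt (1 / (l * r)) : ℂ) • (U i * φ k)) (i : Fin l) (k : Fin r) :
    (ψ i k)ᴴ * Δ⁻¹ * ψ i k = (α : ℂ) • 1 := by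
  calc (ψ i k)ᴴ * Δ⁻¹ * ψ i k
      = ((Real.sqrt (1 / (l * r)) * Real.sqrt (1 / (l * r)) : ℝ) : ℂ) •
          ((φ k)ᴴ * ((U i)ᴴ * Δ⁻¹ * U i) * φ k) := by
        simp only [hψ, conjTranspose_smul, conjTranspose_mul, Complex.star_def,
          Complex.conj_ofReal, Matrix.smul_mul, Matrix.mul_smul, smul_smul, Complex.ofReal_mul,
          Matrix.mul_assoc]
    _ = ((l : ℂ) * r)⁻¹ • ((φ k)ᴴ * Δ⁻¹ * φ k) := by
        rw [Real.mul_self_sqrt (by positivity), hUΔ]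
        push_cast
        rw [one_div]
    _ = (φ k)ᴴ * (((l : ℂ) * r) • Δ)⁻¹ * φ k := by
        have := invertibleOfNonzero hc
        rw [Matrix.inv_smul Δ ((l : ℂ) * r) hΔinv, invOf_eq_inv, Matrix.mul_smul,
          Matrix.smul_mul]
    _ = (α : ℂ) • 1 := hα k

end CGU

theorem stmt_17_general {n l r s : ℕ} (hl : 0 < l)
    (U : Fin l → Matrix (Fin n) (Fin n) ℂ)
    (hUunit : ∀ i, U i * (U i)ᴴ = 1)
    (hUinj : Function.Injective U)
    (hUmul : ∀ i j, ∃ k, U i * U j = U k)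
    (φ : Fin r → Matrix (Fin n) (Fin s) ℂ)
    (hφtr : ∀ k, (φ k * (φ k)ᴴ).trace = 1)
    (ρ : Fin l → Fin r → Matrix (Fin n) (Fin n) ℂ)
    (hρ : ∀ i k, ρ i k = U i * (φ k * (φ k)ᴴ) * (U i)ᴴ)
    (Δ : Matrix (Fin n) (Fin n) ℂ)
    (hΔ : Δ = (1 / ((l : ℂ) * r)) • ∑ i, ∑ k, ρ i k)
    (hΔinv : IsUnit Δ.det) (hΔH : Δ.IsHermitian)
    (lam : ℝ) (hlam : IsLeast (Set.range hΔH.eigenvalues) lam)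
    (α : ℝ) (hα : ∀ k, (φ k)ᴴ * (((l : ℂ) * r) • Δ)⁻¹ * φ k = (α : ℂ) • 1)
    (β : ℝ) (hβ1 : 1 - (n : ℝ) * lam ≤ β) (hβ2 : β < 1)
    (γ : ℝ) (hγ : γ = Real.sqrt ((1 - β) / n))
    (ψ : Fin l → Fin r → Matrix (Fin n) (Fin s) ℂ)
    (hψ : ∀ i k, ψ i k = (Real.sqrt (1 / (l * r)) : ℂ) • (U i * φ k))
    (μ : Fin l → Fin r → Matrix (Fin n) (Fin s) ℂ)
    (hμ : ∀ i k, μ i k = (γ : ℂ) • (Δ⁻¹ * ψ i k)) :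
    (1 - ∑ i, ∑ k, μ i k * (μ i k)ᴴ).PosSemidef ∧
    (Δ * (1 - ∑ i, ∑ k, μ i k * (μ i k)ᴴ)).trace = (β : ℂ) ∧
    ∀ (N0 : Matrix (Fin n) (Fin n) ℂ)
      (N : Fin l → Fin r → Matrix (Fin n) (Fin n) ℂ),
      N0.PosSemidef → (∀ i k, (N i k).PosSemidef) →
      (N0 + ∑ i, ∑ k, N i k = 1) →
      (Δ * N0).trace = (β : ℂ) →
      (1 / (l * r) : ℝ) * ∑ i, ∑ k, ((ρ i k * N i k).trace).re
        ≤ (1 / (l * r) : ℝ) * ∑ i, ∑ k, ((ρ i k * (μ i k * (μ i k)ᴴ)).trace).re := by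
  obtain ⟨i₀, -⟩ := hlam.1
  have hn : (0 : ℝ) < n := Nat.cast_pos.mpr i₀.pos
  -- for `r = 0` we would get `Δ = 0`, which is not invertible since `n > 0`
  have hr : r ≠ 0 := by
    rintro rfl
    have : Nonempty (Fin n) := ⟨i₀⟩
    simp [hΔ] at hΔinv
  have hc : (l : ℂ) * r ≠ 0 := mul_ne_zero (Nat.cast_ne_zero.mpr hl.ne') (Nat.cast_ne_zero.mpr hr)
  have hψ0 := cgu_ne_zero hUunit hφtr hρ hψ hc
  have hb := cgu_conjTranspose_mul_inv_mul_eq_smul_one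
    (cgu_conjTranspose_mul_inv_mul_eq hUunit hUinj hUmul hρ hΔ) hΔinv hc hα hψ
  have hγ2 : γ ^ 2 = (1 - β) / n := by rw [hγ, Real.sq_sqrt (div_nonneg (by linarith) hn.le)]
  have hγΔ : ∀ x ∈ spectrum ℝ Δ, γ ^ 2 ≤ x := by
    rw [hΔH.spectrum_real_eq_range_eigenvalues]
    rintro _ ⟨i, rfl⟩
    rw [hγ2, div_le_iff₀ hn]
    nlinarith [hlam.2 ⟨i, rfl⟩]
  obtain ⟨hpsd, hinconclusive, hoptimal⟩ :=
    Matrix.sim_optimal (ψ := fun x : Fin l × Fin r => ψ x.1 x.2) (μ := fun x => μ x.1 x.2)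
      (by rw [Fintype.sum_prod_type]; exact cgu_density_eq_sum hρ hΔ hψ) hΔinv
      (cgu_trace_density hUunit hφtr hρ hΔ hc) (fun x => hψ0 x.1 x.2) (fun x => hb x.1 x.2)
      (by rw [hγ2, Fintype.card_fin]; field_simp) hγΔ (fun x => hμ x.1 x.2)
  simp only [Fintype.sum_prod_type] at hpsd hinconclusive hoptimal
  refine ⟨hpsd, hinconclusive, fun N0 N _ hN hsum hN0 => ?_⟩
  rw [cgu_re_trace_state_mul hρ hψ, cgu_re_trace_state_mul hρ hψ]
  exact hoptimal N0 (fun x => N x.1 x.2) (fun x => hN x.1 x.2) hsum hN0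

/-- Optimality of the SIM for CGU state sets (Theorem 3, part 3): if the
generators satisfy φ_k^*(ΦΦ^*)⁻¹φ_k = αI (with ΦΦ^* = lrΔ) for all k, then for
every β with 1 − nλ_min ≤ β < 1 the SIM with γ = √((1−β)/n) is a measurement
with P_I = β that maximizes P_D among all measurements with P_I = β. -/
theorem stmt_17 {n l r s : ℕ} (hl : 0 < l)
    (U : Fin l → Matrix (Fin n) (Fin n) ℂ)
    (hUunit : ∀ i, U i * (U i)ᴴ = 1)
    (hUinj : Function.Injective U)
    (hU1 : U ⟨0, hl⟩ = 1)
    (hUmul : ∀ i j, ∃ k, U i * U j = U k)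
    (hUinv : ∀ i, ∃ j, (U i)ᴴ = U j)
    (φ : Fin r → Matrix (Fin n) (Fin s) ℂ)
    (hφtr : ∀ k, (φ k * (φ k)ᴴ).trace = 1)
    (ρ : Fin l → Fin r → Matrix (Fin n) (Fin n) ℂ)
    (hρ : ∀ i k, ρ i k = U i * (φ k * (φ k)ᴴ) * (U i)ᴴ)
    (Δ : Matrix (Fin n) (Fin n) ℂ)
    (hΔ : Δ = (1 / ((l : ℂ) * r)) • ∑ i, ∑ k, ρ i k)
    (hΔinv : IsUnit Δ.det) (hΔH : Δ.IsHermitian)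
    (lam : ℝ) (hlam : IsLeast (Set.range hΔH.eigenvalues) lam)
    (α : ℝ) (hα : ∀ k, (φ k)ᴴ * (((l : ℂ) * r) • Δ)⁻¹ * φ k = (α : ℂ) • 1)
    (β : ℝ) (hβ1 : 1 - (n : ℝ) * lam ≤ β) (hβ2 : β < 1)
    (γ : ℝ) (hγ : γ = Real.sqrt ((1 - β) / n))
    (ψ : Fin l → Fin r → Matrix (Fin n) (Fin s) ℂ)
    (hψ : ∀ i k, ψ i k = (Real.sqrt (1 / (l * r)) : ℂ) • (U i * φ k))
    (μ : Fin l → Fin r → Matrix (Fin n) (Fin s) ℂ)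
    (hμ : ∀ i k, μ i k = (γ : ℂ) • (Δ⁻¹ * ψ i k)) :
    (1 - ∑ i, ∑ k, μ i k * (μ i k)ᴴ).PosSemidef ∧
    (Δ * (1 - ∑ i, ∑ k, μ i k * (μ i k)ᴴ)).trace = (β : ℂ) ∧
    ∀ (N0 : Matrix (Fin n) (Fin n) ℂ)
      (N : Fin l → Fin r → Matrix (Fin n) (Fin n) ℂ),
      N0.PosSemidef → (∀ i k, (N i k).PosSemidef) →
      (N0 + ∑ i, ∑ k, N i k = 1) →
      (Δ * N0).trace = (β : ℂ) →
      (1 / (l * r) : ℝ) * ∑ i, ∑ k, ((ρ i k * N i k).trace).re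
        ≤ (1 / (l * r) : ℝ) * ∑ i, ∑ k, ((ρ i k * (μ i k * (μ i k)ᴴ)).trace).re :=
  stmt_17_general hl U hUunit hUinj hUmul φ hφtr ρ hρ Δ hΔ hΔinv hΔH lam hlam α hα β hβ1 hβ2 γ hγ ψ
    hψ μ hμ
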